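/- arXiv:2010.03492 — 4 statements merged into one kernel-verified Lean document; each statement's English description precedes it below -/
import Mathlib

section
/- For any c > 0 and any closed set F ⊆ ℝ^d, the set of points at distance exactly c from F, i.e. { x ∈ ℝ^d : dist(x, F) = c }, has d-dimensional Lebesgue measure zero. -/
open MeasureTheory Metric Filter

/-- Porosity lemma: near any point of the level set, at any small scale `r`, there is a
ball of radius `r/8` inside the ball of radius `r` which misses the level set. -/
lemma exists_ball_disjoint_level_set (d : ℕ) (F : Set (EuclideanSpace ℝ (Fin d)))
    (hne : F.Nonempty) (c : ℝ) (hc : 0 < c) (x : EuclideanSpace ℝ (Fin d))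
    (hx : Metric.infDist x F = c) {r : ℝ} (hr0 : 0 < r) (hrc : r < c) :
    ∃ z : EuclideanSpace ℝ (Fin d),
      closedBall z (r / 8) ⊆ closedBall x r ∧
      ∀ w ∈ closedBall z (r / 8), Metric.infDist w F ≠ c := by
  obtain ⟨y, hyF, hyd⟩ := Metric.infDist_lt_iff hne |>.1
    (show Metric.infDist x F < c + r / 4 by rw [hx]; linarith)
  have hcd : c ≤ dist x y := hx ▸ Metric.infDist_le_dist_of_mem hyF
  have hD0 : (0 : ℝ) < dist x y := lt_of_lt_of_le hc hcd
  set s : ℝ := (r / 2) / dist x y with hs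
  have hs0 : 0 ≤ s := by positivity
  have hsD : s * dist x y = r / 2 := div_mul_cancel₀ _ hD0.ne'
  have hs1 : s ≤ 1 := by
    rw [hs, div_le_one hD0]; linarith
  set z : EuclideanSpace ℝ (Fin d) := x + s • (y - x) with hz
  have hzx : dist z x = r / 2 := by
    rw [dist_eq_norm, hz, add_sub_cancel_left, norm_smul, Real.norm_eq_abs,
      abs_of_nonneg hs0, ← dist_eq_norm, dist_comm, hsD]
  have hzy : dist z y = dist x y - r / 2 := by
    have : z - y = (1 - s) • (x - y) := by
      rw [hz]; module
    rw [dist_eq_norm, this, norm_smul, Real.norm_eq_abs, abs_of_nonneg (by linarith),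
      ← dist_eq_norm, sub_mul, one_mul]
    rw [dist_comm x y] at hsD ⊢
    linarith
  refine ⟨z, ?_, ?_⟩
  · intro w hw
    simp only [mem_closedBall] at hw ⊢
    calc dist w x ≤ dist w z + dist z x := dist_triangle _ _ _
      _ ≤ r / 8 + r / 2 := add_le_add hw (le_of_eq hzx)
      _ ≤ r := by linarith
  · intro w hw
    simp only [mem_closedBall] at hw
    have h1 : Metric.infDist z F ≤ dist z y := Metric.infDist_le_dist_of_mem hyF
    have h2 : Metric.infDist w F ≤ Metric.infDist z F + dist w z :=
      Metric.infDist_le_infDist_add_dist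
    have : Metric.infDist w F < c := by
      rw [hzy] at h1; linarith
    exact this.ne

/-- For any closed nonempty set `F ⊆ ℝ^d` and any `c > 0`, the set of points at Euclidean
distance exactly `c` from `F` has `d`-dimensional Lebesgue measure zero. -/
theorem volume_dist_level_set_eq_zero (d : ℕ) (F : Set (EuclideanSpace ℝ (Fin d)))
    (hF : IsClosed F) (hne : F.Nonempty) (c : ℝ) (hc : 0 < c) :
    volume {x : EuclideanSpace ℝ (Fin d) | Metric.infDist x F = c} = 0 := by
  set S := {x : EuclideanSpace ℝ (Fin d) | Metric.infDist x F = c} with hSdef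
  by_contra hvol
  have hres : volume.restrict S ≠ 0 := fun h => hvol (Measure.restrict_eq_zero.1 h)
  have hneBot : (ae (volume.restrict S)).NeBot := ae_neBot.2 hres
  obtain ⟨x, hxT, hxS⟩ :=
    ((Besicovitch.ae_tendsto_measure_inter_div volume S).and
      (ae_restrict_mem ((isClosed_eq (continuous_infDist_pt F) continuous_const).measurableSet))).exists
  -- `hxS : x ∈ S`, `hxT` : density tendsto 1
  set ε : ENNReal := ENNReal.ofReal ((1 / 8 : ℝ) ^ d) with hε
  have hε0 : 0 < ε := by
    rw [hε]; exact ENNReal.ofReal_pos.2 (by positivity)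
  have hεle : ε ≤ 1 := by
    rw [hε]; refine ENNReal.ofReal_le_one.2 ?_
    exact pow_le_one₀ (by norm_num) (by norm_num)
  have hlt : (1 : ENNReal) - ε < 1 :=
    ENNReal.sub_lt_self ENNReal.one_ne_top one_ne_zero hε0.ne'
  have hev1 : ∀ᶠ r in nhdsWithin (0:ℝ) (Set.Ioi 0),
      (1 : ENNReal) - ε < volume (S ∩ closedBall x r) / volume (closedBall x r) :=
    hxT.eventually (eventually_gt_nhds hlt)
  have hev2 : ∀ᶠ r in nhdsWithin (0:ℝ) (Set.Ioi 0), r < c :=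
    eventually_nhdsWithin_of_eventually_nhds (eventually_lt_nhds hc)
  have hev3 : ∀ᶠ r in nhdsWithin (0:ℝ) (Set.Ioi 0), (0:ℝ) < r :=
    eventually_mem_nhdsWithin
  obtain ⟨r, h1, hrc, hr0⟩ := (hev1.and (hev2.and hev3)).exists
  -- porosity bound
  obtain ⟨z, hzsub, hzdisj⟩ := exists_ball_disjoint_level_set d F hne c hc x hxS hr0 hrc
  have hBne : volume (closedBall x r) ≠ 0 := (measure_closedBall_pos volume x hr0).ne'
  have hBtop : volume (closedBall x r) ≠ ⊤ := measure_closedBall_lt_top.ne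
  have hball : volume (closedBall z (r / 8)) = ε * volume (closedBall x r) := by
    rw [Measure.addHaar_closedBall' volume z (by positivity),
      Measure.addHaar_closedBall' volume x hr0.le,
      finrank_euclideanSpace_fin]
    rw [show r / 8 = (1/8) * r by ring, mul_pow, ENNReal.ofReal_mul (by positivity), hε,
      mul_assoc]
  have hdisj : Disjoint (S ∩ closedBall x r) (closedBall z (r / 8)) := by
    rw [Set.disjoint_left]
    rintro w ⟨hwS, -⟩ hwz
    exact hzdisj w hwz hwS
  have hsum : volume (S ∩ closedBall x r) + volume (closedBall z (r / 8))
      ≤ volume (closedBall x r) := by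
    rw [← measure_union hdisj measurableSet_closedBall]
    exact measure_mono (Set.union_subset Set.inter_subset_right hzsub)
  have hkey : volume (S ∩ closedBall x r) ≤ (1 - ε) * volume (closedBall x r) := by
    rw [ENNReal.sub_mul (fun _ _ => hBtop), one_mul]
    exact ENNReal.le_sub_of_add_le_right (ENNReal.mul_ne_top ENNReal.ofReal_ne_top hBtop) (by rw [← hball]; exact hsum)
  have : volume (S ∩ closedBall x r) / volume (closedBall x r) ≤ 1 - ε := by
    rw [ENNReal.div_le_iff hBne hBtop]
    exact hkey
  exact absurd (lt_of_lt_of_le h1 this) (lt_irrefl _)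
end

section
/- Let Ω ⊆ [0,1]^d be Peano–Jordan measurable and K_c = { p ∈ [0,1]^d : dist(p, ∂Ω) ≤ c }. Then for every c ≥ 0 the set K_c is closed, and the boundary of K_c (within [0,1]^d) has Lebesgue measure zero; in particular K_c is itself Peano–Jordan measurable. -/
open MeasureTheory Metric Set Filter


lemma level_set_null (d : ℕ) (F : Set (EuclideanSpace ℝ (Fin d))) (hF : IsClosed F)
    {c : ℝ} (hc : 0 < c) :
    volume {p : EuclideanSpace ℝ (Fin d) | Metric.infDist p F = c} = 0 := by
  rcases F.eq_empty_or_nonempty with rfl | hFne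
  · simp only [Metric.infDist_empty]
    have he : {p : EuclideanSpace ℝ (Fin d) | (0:ℝ) = c} = ∅ :=
      eq_empty_iff_forall_notMem.2 fun x hx => hc.ne' hx.symm
    rw [he, measure_empty]
  set S := {p : EuclideanSpace ℝ (Fin d) | Metric.infDist p F = c} with hS
  have hSmeas : MeasurableSet S :=
    (isClosed_eq (continuous_infDist_pt F) continuous_const).measurableSet
  have hdens := Besicovitch.ae_tendsto_measure_inter_div_of_measurableSet volume hSmeas
  -- show for every x ∈ S the density limit fails
  have key : ∀ x ∈ S, ¬ Tendsto (fun r => volume (S ∩ closedBall x r) / volume (closedBall x r))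
      (nhdsWithin 0 (Set.Ioi 0)) (nhds (S.indicator 1 x)) := by
    intro x hx htend
    rw [Set.indicator_of_mem hx, Pi.one_apply] at htend
    obtain ⟨y, hyF, hxy⟩ := hF.exists_infDist_eq_dist hFne x
    have hxyc : dist x y = c := by rw [← hxy]; exact hx
    set q : ENNReal := ENNReal.ofReal ((4 : ℝ)⁻¹ ^ d) with hq
    have hq0 : q ≠ 0 := (ENNReal.ofReal_pos.2 (by positivity)).ne'
    have hq1 : q ≤ 1 := by
      rw [hq, ← ENNReal.ofReal_one]
      exact ENNReal.ofReal_le_ofReal (by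
        apply pow_le_one₀ <;> norm_num)
    have bound : ∀ r ∈ Set.Ioo (0:ℝ) c,
        volume (S ∩ closedBall x r) / volume (closedBall x r) ≤ 1 - q := by
      intro r hr
      set z : EuclideanSpace ℝ (Fin d) := x + (r / (2 * c)) • (y - x) with hz
      have htpos : 0 < r / (2 * c) := div_pos hr.1 (by positivity)
      have htlt : r / (2 * c) < 1 := by
        rw [div_lt_one (by positivity)]; linarith [hr.2]
      have hzx : dist z x = r / 2 := by
        rw [hz, dist_eq_norm, add_sub_cancel_left, norm_smul, Real.norm_eq_abs,
          abs_of_pos htpos, ← dist_eq_norm, dist_comm, hxyc]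
        field_simp
      have hzy : dist z y = c - r / 2 := by
        have : z - y = (1 - r / (2 * c)) • (x - y) := by
          rw [hz]; module
        rw [dist_eq_norm, this, norm_smul, Real.norm_eq_abs,
          abs_of_pos (by linarith), ← dist_eq_norm, hxyc]
        field_simp
      have hdisj : Disjoint (S ∩ closedBall x r) (closedBall z (r / 4)) := by
        rw [Set.disjoint_left]
        rintro w ⟨hwS, -⟩ hwz
        have : infDist w F ≤ dist w y := infDist_le_dist_of_mem hyF
        have h2 : dist w y ≤ dist w z + dist z y := dist_triangle w z y
        rw [mem_closedBall] at hwz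
        have : infDist w F < c := by
          calc infDist w F ≤ dist w z + dist z y := le_trans ‹infDist w F ≤ dist w y› h2
          _ ≤ r / 4 + (c - r / 2) := by gcongr; exact le_of_eq hzy
          _ < c := by linarith [hr.1]
        exact this.ne hwS
      have hsub : closedBall z (r / 4) ⊆ closedBall x r := by
        intro w hw
        rw [mem_closedBall] at hw ⊢
        calc dist w x ≤ dist w z + dist z x := dist_triangle w z x
        _ ≤ r / 4 + r / 2 := by gcongr; exact le_of_eq hzx
        _ ≤ r := by linarith [hr.1]
      -- measures
      have hB := Measure.addHaar_closedBall (volume : Measure (EuclideanSpace ℝ (Fin d))) x hr.1.le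
      have hB' := Measure.addHaar_closedBall (volume : Measure (EuclideanSpace ℝ (Fin d))) z
        (by linarith [hr.1] : (0:ℝ) ≤ r / 4)
      rw [finrank_euclideanSpace_fin] at hB hB'
      have hqB : volume (closedBall z (r / 4)) = q * volume (closedBall x r) := by
        rw [hB, hB', hq, ← mul_assoc, ← ENNReal.ofReal_mul (by positivity)]
        congr 2
        rw [div_eq_mul_inv, mul_comm r, mul_pow]
      have hBne : volume (closedBall x r) ≠ 0 :=
        (measure_closedBall_pos volume x hr.1).ne'
      have hBfin : volume (closedBall x r) ≠ ⊤ :=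
        measure_closedBall_lt_top.ne
      have hadd : volume (S ∩ closedBall x r) + volume (closedBall z (r / 4))
          ≤ volume (closedBall x r) := by
        rw [← measure_union hdisj measurableSet_closedBall]
        exact measure_mono (Set.union_subset Set.inter_subset_right hsub)
      rw [hqB] at hadd
      rw [ENNReal.div_le_iff hBne hBfin, ENNReal.sub_mul (fun _ _ => hBfin), one_mul]
      exact ENNReal.le_sub_of_add_le_right
        (ENNReal.mul_ne_top (hq1.trans_lt ENNReal.one_lt_top).ne hBfin) hadd
    have hmem : Set.Ioo (0:ℝ) c ∈ nhdsWithin (0:ℝ) (Set.Ioi 0) :=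
      Ioo_mem_nhdsGT_of_mem ⟨le_refl 0, hc⟩
    have : (1 : ENNReal) ≤ 1 - q :=
      le_of_tendsto htend (Filter.eventually_of_mem hmem bound)
    exact absurd this (not_le.2 (ENNReal.sub_lt_self ENNReal.one_ne_top one_ne_zero hq0))
  -- conclude
  have : S ⊆ {x | ¬ Tendsto (fun r => volume (S ∩ closedBall x r) / volume (closedBall x r))
      (nhdsWithin 0 (Set.Ioi 0)) (nhds (S.indicator 1 x))} := key
  exact measure_mono_null this hdens

/-- For `Ω ⊆ [0,1]^d` Peano–Jordan measurable and `K_c` the set of points of `[0,1]^d` at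
Euclidean distance at most `c ≥ 0` from `∂Ω`: the set `K_c` is closed and its boundary has
Lebesgue measure zero (so `K_c` is itself Peano–Jordan measurable). -/
theorem K_c_closed_and_boundary_null (d : ℕ) (Ω : Set (EuclideanSpace ℝ (Fin d)))
    (hΩsub : Ω ⊆ {x : EuclideanSpace ℝ (Fin d) | ∀ j, x j ∈ Set.Icc (0 : ℝ) 1})
    (hPJ : volume (frontier Ω) = 0) (c : ℝ) (hc : 0 ≤ c) :
    IsClosed {p : EuclideanSpace ℝ (Fin d) |
        (∀ j, p j ∈ Set.Icc (0 : ℝ) 1) ∧ Metric.infDist p (frontier Ω) ≤ c} ∧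
    volume (frontier {p : EuclideanSpace ℝ (Fin d) |
        (∀ j, p j ∈ Set.Icc (0 : ℝ) 1) ∧ Metric.infDist p (frontier Ω) ≤ c}) = 0 := by
  set C : Set (EuclideanSpace ℝ (Fin d)) := {x | ∀ j, x j ∈ Set.Icc (0 : ℝ) 1} with hC
  set B : Set (EuclideanSpace ℝ (Fin d)) := {p | Metric.infDist p (frontier Ω) ≤ c} with hB
  have hKeq : {p : EuclideanSpace ℝ (Fin d) |
      (∀ j, p j ∈ Set.Icc (0 : ℝ) 1) ∧ Metric.infDist p (frontier Ω) ≤ c} = C ∩ B := rfl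
  have hCcont : ∀ j : Fin d, Continuous fun x : EuclideanSpace ℝ (Fin d) => x j :=
    fun j => (EuclideanSpace.proj j).continuous
  have hCclosed : IsClosed C := by
    have : C = ⋂ j, (fun x : EuclideanSpace ℝ (Fin d) => x j) ⁻¹' Set.Icc 0 1 := by
      ext x; simp [hC]
    rw [this]
    exact isClosed_iInter fun j => isClosed_Icc.preimage (hCcont j)
  have hBclosed : IsClosed B :=
    isClosed_le (continuous_infDist_pt _) continuous_const
  have hKclosed : IsClosed (C ∩ B) := hCclosed.inter hBclosed
  refine ⟨by rw [hKeq]; exact hKclosed, ?_⟩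
  rw [hKeq]
  -- frontier C is null since C is convex
  have hCconv : Convex ℝ C := by
    have : C = ⋂ j, (fun x : EuclideanSpace ℝ (Fin d) => x j) ⁻¹' Set.Icc 0 1 := by
      ext x; simp [hC]
    rw [this]
    exact convex_iInter fun j =>
      (convex_Icc (0:ℝ) 1).linear_preimage (EuclideanSpace.proj j).toLinearMap
  have hCnull : volume (frontier C) = 0 := hCconv.addHaar_frontier volume
  -- frontier B is null
  have hBnull : volume (frontier B) = 0 := by
    rcases eq_or_lt_of_le hc with rfl | hcpos
    · rcases (frontier Ω).eq_empty_or_nonempty with hFe | hFne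
      · have : B = Set.univ := by
          ext p; simp [hB, hFe, Metric.infDist_empty]
        rw [this, frontier_univ, measure_empty]
      · have hsub : frontier B ⊆ frontier Ω := by
          refine hBclosed.frontier_subset.trans ?_
          intro p hp
          have h0 : Metric.infDist p (frontier Ω) = 0 :=
            le_antisymm hp Metric.infDist_nonneg
          have hcl := (Metric.mem_closure_iff_infDist_zero hFne).2 h0
          rwa [isClosed_frontier.closure_eq] at hcl
        exact measure_mono_null hsub hPJ
    · have hsub : frontier B ⊆ {p : EuclideanSpace ℝ (Fin d) |
          Metric.infDist p (frontier Ω) = c} := by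
        intro p hp
        have h1 : p ∈ B := hBclosed.frontier_subset hp
        have h2 : p ∉ interior B := hp.2
        have h3 : ¬ Metric.infDist p (frontier Ω) < c := by
          intro hlt
          exact h2 (mem_interior_iff_mem_nhds.2 <|
            Filter.mem_of_superset
              (((continuous_infDist_pt (frontier Ω)).tendsto p).eventually
                (eventually_lt_nhds hlt)) fun q hq => show Metric.infDist q (frontier Ω) ≤ c from le_of_lt hq)
        exact le_antisymm h1 (not_lt.1 h3)
      exact measure_mono_null hsub (level_set_null d (frontier Ω) isClosed_frontier hcpos)
  -- combine
  exact measure_mono_null ((frontier_inter_subset C B).trans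
      (Set.union_subset_union Set.inter_subset_left Set.inter_subset_right))
    (measure_union_null hCnull hBnull)
end

section
/- Let Ω ⊆ [0,1]^d be Peano–Jordan measurable. For a multi-index n, the number of indices i with 1 ≤ i ≤ n such that the two grid points i/n and i/(n+1) are separated by the boundary of Ω (i.e., exactly one of them lies in Ω) is o(n_1⋯n_d) as min(n) → ∞. -/
/-!
If `i/n` and `i/(n+1)` lie on different sides of `Ω`, the segment joining them meets `∂Ω`, and
its length is at most `ε = ∑ⱼ 1/nⱼ`. Hence the grid cell `∏ⱼ ((iⱼ - 1)/nⱼ, iⱼ/nⱼ)` lies in the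
`2ε`-thickening of `∂Ω`. These cells are pairwise disjoint of volume `1/(n₁⋯n_d)`, so the
proportion of mismatched indices is at most the volume of that thickening, which tends to
`μ(∂Ω) = 0` because `∂Ω` is compact.
-/

open MeasureTheory Set Filter Metric Topology Function
open scoped ENNReal

theorem IsPreconnected.inter_frontier_nonempty {X : Type*} [TopologicalSpace X] {s t : Set X}
    (hs : IsPreconnected s) (hst : (s ∩ t).Nonempty) (hst' : (s \ t).Nonempty) :
    (s ∩ frontier t).Nonempty := by
  by_contra h
  rw [not_nonempty_iff_eq_empty, ← disjoint_iff_inter_eq_empty] at h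
  have hcover : s ⊆ interior t ∪ (closure t)ᶜ := fun x hx => by
    by_cases hi : x ∈ interior t
    · exact .inl hi
    · exact .inr fun hc => h.ne_of_mem hx ⟨hc, hi⟩ rfl
  rcases hs.subset_or_subset isOpen_interior isClosed_closure.isOpen_compl
      (disjoint_compl_right.mono_left interior_subset_closure) hcover with h' | h'
  · obtain ⟨x, hxs, hxt⟩ := hst'
    exact hxt (interior_subset (h' hxs))
  · obtain ⟨x, hxs, hxt⟩ := hst
    exact h' hxs (subset_closure hxt)

theorem exists_mem_frontier_dist_le_of_not_iff {E : Type*} [NormedAddCommGroup E]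
    [NormedSpace ℝ E] {s : Set E} {a b : E} (h : ¬(a ∈ s ↔ b ∈ s)) :
    ∃ c ∈ frontier s, dist a c ≤ dist a b := by
  wlog ha : a ∈ s generalizing s
  · obtain ⟨c, hc, hac⟩ := this (s := sᶜ) (by rwa [mem_compl_iff, mem_compl_iff, not_iff_not]) ha
    exact ⟨c, frontier_compl s ▸ hc, hac⟩
  have hb : b ∉ s := fun hb => h (iff_of_true ha hb)
  obtain ⟨c, hcab, hc⟩ := (convex_segment a b).isPreconnected.inter_frontier_nonempty
    ⟨a, left_mem_segment ℝ a b, ha⟩ ⟨b, right_mem_segment ℝ a b, hb⟩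
  exact ⟨c, hc, by linarith [dist_add_dist_of_mem_segment hcab, dist_nonneg (x := c) (y := b)]⟩

theorem abs_div_sub_div_add_one_le {a x : ℝ} (ha₀ : 0 ≤ a) (hax : a ≤ x) :
    |a / x - a / (x + 1)| ≤ x⁻¹ := by
  rcases (ha₀.trans hax).eq_or_lt with rfl | hx
  · simp [le_antisymm hax ha₀]
  have hdiff : a / x - a / (x + 1) = a / (x * (x + 1)) := by
    field_simp
    ring
  rw [hdiff, abs_of_nonneg (by positivity)]
  calc a / (x * (x + 1)) ≤ (x + 1) / (x * (x + 1)) := by gcongr; linarith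
    _ = x⁻¹ := by field_simp

section Grid

variable {ι : Type*}

def gridCell (n i : ι → ℕ) : Set (ι → ℝ) :=
  univ.pi fun j => Ioo (((i j : ℝ) - 1) / n j) (i j / n j)

def gridMismatch (Ω : Set (ι → ℝ)) (n : ι → ℕ) : Set (ι → ℕ) :=
  {i | (∀ j, 1 ≤ i j ∧ i j ≤ n j) ∧
    ¬(((fun j => (i j : ℝ) / (n j : ℝ)) ∈ Ω) ↔ ((fun j => (i j : ℝ) / ((n j : ℝ) + 1)) ∈ Ω))}

theorem pairwise_disjoint_gridCell (n : ι → ℕ) : Pairwise (Disjoint on gridCell n) := by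
  intro i i' hne
  obtain ⟨j, hj⟩ := Function.ne_iff.1 hne
  wlog hlt : i j < i' j generalizing i i'
  · exact (this hne.symm hj.symm (lt_of_le_of_ne (not_lt.1 hlt) hj.symm)).symm
  have hle : (i j : ℝ) / n j ≤ ((i' j : ℝ) - 1) / n j := by
    have : (i j : ℝ) + 1 ≤ i' j := by exact_mod_cast hlt
    gcongr
    linarith
  refine disjoint_left.2 fun x hx hx' => ?_
  linarith [(hx j (mem_univ j)).2, (hx' j (mem_univ j)).1]

variable [Fintype ι]

theorem measurableSet_gridCell (n i : ι → ℕ) : MeasurableSet (gridCell n i) :=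
  MeasurableSet.univ_pi fun _ => measurableSet_Ioo

theorem volume_gridCell (n i : ι → ℕ) :
    volume (gridCell n i) = ∏ j, ENNReal.ofReal (n j : ℝ)⁻¹ := by
  simp only [gridCell, volume_pi_pi, Real.volume_Ioo]
  congr! 2
  ring

theorem inv_le_sum_inv (n : ι → ℕ) (j : ι) : (n j : ℝ)⁻¹ ≤ ∑ k, (n k : ℝ)⁻¹ :=
  Finset.single_le_sum (f := fun k => (n k : ℝ)⁻¹) (fun _ _ => by positivity) (Finset.mem_univ j)

theorem gridCell_subset_closedBall (n i : ι → ℕ) :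
    gridCell n i ⊆ closedBall (fun j => (i j : ℝ) / n j) (∑ j, (n j : ℝ)⁻¹) := by
  intro x hx
  rw [mem_closedBall, dist_pi_le_iff (by positivity)]
  intro j
  have hxj := hx j (mem_univ j)
  have hlow : ((i j : ℝ) - 1) / n j = i j / n j - (n j : ℝ)⁻¹ := by ring
  rw [mem_Ioo, hlow] at hxj
  rw [Real.dist_eq, abs_le]
  constructor <;> linarith [inv_le_sum_inv n j, inv_nonneg.2 (Nat.cast_nonneg (α := ℝ) (n j))]

theorem dist_div_div_add_one_le {n i : ι → ℕ} (hi : i ≤ n) :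
    dist (fun j => (i j : ℝ) / n j) (fun j => (i j : ℝ) / (n j + 1)) ≤ ∑ j, (n j : ℝ)⁻¹ := by
  rw [dist_pi_le_iff (by positivity)]
  intro j
  rw [Real.dist_eq]
  exact (abs_div_sub_div_add_one_le (Nat.cast_nonneg _) (by exact_mod_cast hi j)).trans
    (inv_le_sum_inv n j)

theorem gridCell_subset_cthickening_of_mem_gridMismatch {Ω : Set (ι → ℝ)} {n i : ι → ℕ}
    (hi : i ∈ gridMismatch Ω n) :
    gridCell n i ⊆ cthickening (2 * ∑ j, (n j : ℝ)⁻¹) (frontier Ω) := by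
  obtain ⟨c, hc, hac⟩ := exists_mem_frontier_dist_le_of_not_iff hi.2
  have hac' := hac.trans (dist_div_div_add_one_le fun j => (hi.1 j).2)
  calc gridCell n i ⊆ closedBall _ (∑ j, (n j : ℝ)⁻¹) := gridCell_subset_closedBall n i
    _ ⊆ closedBall c (2 * ∑ j, (n j : ℝ)⁻¹) :=
      closedBall_subset_closedBall' (by linarith)
    _ ⊆ _ := closedBall_subset_cthickening hc _

theorem card_mul_prod_le_volume_of_gridCell_subset {n : ι → ℕ} {S : Finset (ι → ℕ)}
    {A : Set (ι → ℝ)} (hS : ∀ i ∈ S, gridCell n i ⊆ A) :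
    S.card * ∏ j, ENNReal.ofReal (n j : ℝ)⁻¹ ≤ volume A := by
  calc (S.card : ℝ≥0∞) * ∏ j, ENNReal.ofReal (n j : ℝ)⁻¹ = ∑ i ∈ S, volume (gridCell n i) := by
        simp [volume_gridCell]
    _ = volume (⋃ i ∈ S, gridCell n i) :=
        (measure_biUnion_finset ((pairwise_disjoint_gridCell n).set_pairwise _)
          fun i _ => measurableSet_gridCell n i).symm
    _ ≤ volume A := measure_mono (iUnion₂_subset hS)

theorem ncard_gridMismatch_div_prod_le {Ω : Set (ι → ℝ)} (hΩ : Bornology.IsBounded Ω)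
    (n : ι → ℕ) :
    ((gridMismatch Ω n).ncard : ℝ) / ∏ j, (n j : ℝ)
      ≤ (volume (cthickening (2 * ∑ j, (n j : ℝ)⁻¹) (frontier Ω))).toReal := by
  classical
  have hfin : (gridMismatch Ω n).Finite :=
    (Set.finite_Iic n).subset fun i hi j => (hi.1 j).2
  have hvol : volume (cthickening (2 * ∑ j, (n j : ℝ)⁻¹) (frontier Ω)) ≠ ∞ :=
    (hΩ.closure.subset frontier_subset_closure).cthickening.measure_lt_top.ne
  have hle := ENNReal.toReal_mono hvol (card_mul_prod_le_volume_of_gridCell_subset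
    (S := hfin.toFinset) fun i hi =>
      gridCell_subset_cthickening_of_mem_gridMismatch (hfin.mem_toFinset.1 hi))
  rw [Set.ncard_eq_toFinset_card _ hfin, div_eq_mul_inv, ← Finset.prod_inv_distrib]
  simpa [ENNReal.toReal_prod] using hle

theorem tendsto_sum_inv_atTop : Tendsto (fun n : ι → ℕ => ∑ j, (n j : ℝ)⁻¹) atTop (𝓝 0) := by
  have hcoord (j : ι) : Tendsto (fun n : ι → ℕ => n j) atTop atTop :=
    tendsto_atTop_atTop_of_monotone (fun (_ _ : ι → ℕ) h => h j) fun b => ⟨fun _ => b, le_rfl⟩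
  simpa using tendsto_finsetSum (f := fun j (n : ι → ℕ) => (n j : ℝ)⁻¹) Finset.univ
    fun j _ => tendsto_inv_atTop_nhds_zero_nat.comp (hcoord j)

end Grid

/-- For `Ω ⊆ [0,1]^d` Peano–Jordan measurable, the number of indices `i` with `1 ≤ i ≤ n`
such that exactly one of the two grid points `i/n` and `i/(n+1)` lies in `Ω` is
`o(n_1 ⋯ n_d)` as all components of `n` tend to infinity. -/
theorem grid_mismatch_count_little_o (d : ℕ) (Ω : Set (Fin d → ℝ))
    (hΩsub : Ω ⊆ Set.Icc 0 1) (hPJ : volume (frontier Ω) = 0) :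
    Tendsto
      (fun n : Fin d → ℕ =>
        (Set.ncard {i : Fin d → ℕ |
            (∀ j, 1 ≤ i j ∧ i j ≤ n j) ∧
              ¬(((fun j => (i j : ℝ) / (n j : ℝ)) ∈ Ω) ↔
                ((fun j => (i j : ℝ) / ((n j : ℝ) + 1)) ∈ Ω))} : ℝ)
          / ∏ j, (n j : ℝ))
      atTop (nhds 0) := by
  have hbdd : Bornology.IsBounded Ω := isBounded_Icc 0 1 |>.subset hΩsub
  have hcpt : IsCompact (frontier Ω) := isCompact_of_isClosed_isBounded isClosed_frontier
    (hbdd.closure.subset frontier_subset_closure)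
  have hthick : Tendsto (fun r => (volume (cthickening r (frontier Ω))).toReal) (𝓝 0) (𝓝 0) := by
    simpa [hPJ, comp_def] using (ENNReal.tendsto_toReal (by simp [hPJ])).comp
      (tendsto_measure_cthickening_of_isCompact (μ := volume) hcpt)
  have hradius : Tendsto (fun n : Fin d → ℕ => 2 * ∑ j, (n j : ℝ)⁻¹) atTop (𝓝 0) := by
    simpa using (tendsto_sum_inv_atTop (ι := Fin d)).const_mul (2 : ℝ)
  exact squeeze_zero (fun n => by positivity) (ncard_gridMismatch_div_prod_le hbdd)
    (hthick.comp hradius)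
end

section
/- Define, for an m×m complex matrix C, the quantity p(C) = min_{1 ≤ i ≤ m+1} ( (i−1)/m + σ_i(C) ) with the convention σ_{m+1}(C) = 0, where σ_1 ≥ … ≥ σ_m are the singular values. With D, Π as above (rank r, size N), for any N×N matrices A, B: p(A − B) ≥ (r/N) · p(R(A) − R(B)), where on the right p is computed with matrices of size r. -/
open Matrix

/-- The `r×N` selection matrix `Π` with `Π_{k,j} = δ_{j, φ k}`. -/
def Pmat (N r : ℕ) (φ : Fin r → Fin N) : Matrix (Fin r) (Fin N) ℂ :=
  Matrix.of fun k j => if φ k = j then 1 else 0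

/-- The restriction operator `R(A) = Π A Πᵀ`. -/
noncomputable def Rop (N r : ℕ) (φ : Fin r → Fin N) (A : Matrix (Fin N) (Fin N) ℂ) :
    Matrix (Fin r) (Fin r) ℂ :=
  Pmat N r φ * A * (Pmat N r φ)ᵀ

/-- The singular values of a square complex matrix, listed in decreasing order. -/
noncomputable def sv {m : ℕ} (A : Matrix (Fin m) (Fin m) ℂ) : Fin m → ℝ :=
  fun i =>
    Real.sqrt ((Matrix.isHermitian_conjTranspose_mul_self A).eigenvalues
      (Tuple.sort (Matrix.isHermitian_conjTranspose_mul_self A).eigenvalues i.rev))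

/-- The a.c.s. modulus `p(C) = min_{1 ≤ i ≤ m+1} ((i−1)/m + σ_i(C))`, with the convention
`σ_{m+1}(C) = 0`, for an `m×m` complex matrix `C`. -/
noncomputable def acsP {m : ℕ} (C : Matrix (Fin m) (Fin m) ℂ) : ℝ :=
  ⨅ i : Fin (m + 1),
    (((i : ℕ) : ℝ) / m + if h : (i : ℕ) < m then sv C ⟨(i : ℕ), h⟩ else 0)

/-! Since `Πᵀ` is an isometry, `R(A) − R(B) = (Πᵀ)ᴴ (A − B) Πᵀ` is a compression of `A − B`, and
compressions do not increase singular values. For `C' = QᴴCQ` with `QᴴQ = 1`, the span of the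
eigenvectors of `CᴴC` for its `N − k` smallest eigenvalues and the image under `Q` of the span of
the eigenvectors of `C'ᴴC'` for its `k + 1` largest eigenvalues have a common vector `x = Qu ≠ 0`,
so `σ_k(C')² ‖u‖² ≤ ‖C'u‖² ≤ ‖Cx‖² ≤ σ_k(C)² ‖x‖²`. Then each term `i/N + σ_i(A − B)` of
`p(A − B)` is at least `r/N` times the `i`-th term of `p(R(A) − R(B))` when `i < r`, and at least
`r/N ≥ (r/N) p(R(A) − R(B))` when `i ≥ r`. -/

open Module RCLike Finset
open scoped InnerProductSpace

namespace Orthonormal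

variable {𝕜 E ι : Type*} [RCLike 𝕜] [NormedAddCommGroup E] [InnerProductSpace 𝕜 E]
  [Fintype ι] {v : ι → E}

lemma norm_sum_smul_sq (hv : Orthonormal 𝕜 v) (c : ι → 𝕜) :
    ‖∑ i, c i • v i‖ ^ 2 = ∑ i, ‖c i‖ ^ 2 := by
  rw [@norm_sq_eq_re_inner 𝕜, hv.inner_sum, map_sum]
  simp_rw [RCLike.conj_mul]
  norm_cast

variable {T : E →ₗ[𝕜] E} {μ : ι → ℝ}

lemma re_inner_map_sum_smul (hv : Orthonormal 𝕜 v) (hT : ∀ i, T (v i) = (μ i : 𝕜) • v i)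
    (c : ι → 𝕜) :
    re ⟪∑ i, c i • v i, T (∑ i, c i • v i)⟫_𝕜 = ∑ i, μ i * ‖c i‖ ^ 2 := by
  have hTc : T (∑ i, c i • v i) = ∑ i, (c i * μ i) • v i := by
    simp only [map_sum, map_smul, hT, smul_smul]
  rw [hTc, hv.inner_sum, map_sum]
  refine Finset.sum_congr rfl fun i _ => ?_
  rw [← mul_assoc, RCLike.conj_mul, mul_comm]
  norm_cast

lemma re_inner_map_le_of_mem_span (hv : Orthonormal 𝕜 v) (hT : ∀ i, T (v i) = (μ i : 𝕜) • v i)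
    {t : ℝ} (hμ : ∀ i, μ i ≤ t) {x : E} (hx : x ∈ Submodule.span 𝕜 (Set.range v)) :
    re ⟪x, T x⟫_𝕜 ≤ t * ‖x‖ ^ 2 := by
  obtain ⟨c, rfl⟩ := (Submodule.mem_span_range_iff_exists_fun 𝕜).1 hx
  rw [hv.re_inner_map_sum_smul hT, hv.norm_sum_smul_sq, Finset.mul_sum]
  exact Finset.sum_le_sum fun i _ => by gcongr; exact hμ i

lemma le_re_inner_map_of_mem_span (hv : Orthonormal 𝕜 v) (hT : ∀ i, T (v i) = (μ i : 𝕜) • v i)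
    {t : ℝ} (hμ : ∀ i, t ≤ μ i) {x : E} (hx : x ∈ Submodule.span 𝕜 (Set.range v)) :
    t * ‖x‖ ^ 2 ≤ re ⟪x, T x⟫_𝕜 := by
  obtain ⟨c, rfl⟩ := (Submodule.mem_span_range_iff_exists_fun 𝕜).1 hx
  rw [hv.re_inner_map_sum_smul hT, hv.norm_sum_smul_sq, Finset.mul_sum]
  exact Finset.sum_le_sum fun i _ => by gcongr; exact hμ i

end Orthonormal

theorem Submodule.inf_ne_bot_of_finrank_lt_add {K V : Type*} [DivisionRing K] [AddCommGroup V]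
    [Module K V] [FiniteDimensional K V] {s t : Submodule K V}
    (h : finrank K V < finrank K s + finrank K t) : s ⊓ t ≠ ⊥ := by
  intro hst
  have hsum := Submodule.finrank_sup_add_finrank_inf_eq s t
  rw [hst, finrank_bot] at hsum
  have := (s ⊔ t).finrank_le
  omega

namespace Matrix

variable {𝕜 : Type*} [RCLike 𝕜]

section Isometry

variable {m n : Type*} [Fintype m] [Fintype n] [DecidableEq m] [DecidableEq n]

lemma re_inner_toEuclideanLin_conjTranspose_mul_self (C : Matrix m n 𝕜)
    (x : EuclideanSpace 𝕜 n) :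
    re ⟪x, toEuclideanLin (Cᴴ * C) x⟫_𝕜 = ‖toEuclideanLin C x‖ ^ 2 := by
  rw [toLpLin_mul_same, LinearMap.comp_apply, toEuclideanLin_conjTranspose_eq_adjoint,
    LinearMap.adjoint_inner_right, ← @norm_sq_eq_re_inner 𝕜]

variable {Q : Matrix n m 𝕜}

lemma norm_toEuclideanLin_of_conjTranspose_mul_self_eq_one (hQ : Qᴴ * Q = 1)
    (u : EuclideanSpace 𝕜 m) : ‖toEuclideanLin Q u‖ = ‖u‖ := by
  have h := re_inner_toEuclideanLin_conjTranspose_mul_self Q u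
  rw [hQ, toLpLin_one, LinearMap.id_apply, ← @norm_sq_eq_re_inner 𝕜] at h
  exact (pow_left_inj₀ (norm_nonneg _) (norm_nonneg _) two_ne_zero).1 h.symm

lemma norm_toEuclideanLin_conjTranspose_le (hQ : Qᴴ * Q = 1) (y : EuclideanSpace 𝕜 n) :
    ‖toEuclideanLin Qᴴ y‖ ≤ ‖y‖ := by
  set z := toEuclideanLin Qᴴ y
  have h : ‖z‖ ^ 2 ≤ ‖y‖ * ‖z‖ :=
    calc ‖z‖ ^ 2 = re ⟪y, toEuclideanLin Q z⟫_𝕜 := by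
          rw [← LinearMap.adjoint_inner_left, ← toEuclideanLin_conjTranspose_eq_adjoint,
            @norm_sq_eq_re_inner 𝕜]
      _ ≤ ‖y‖ * ‖toEuclideanLin Q z‖ := (re_le_norm _).trans (norm_inner_le_norm _ _)
      _ = ‖y‖ * ‖z‖ := by rw [norm_toEuclideanLin_of_conjTranspose_mul_self_eq_one hQ]
  nlinarith [norm_nonneg z, norm_nonneg y]

end Isometry

namespace IsHermitian

variable {n : ℕ} {H : Matrix (Fin n) (Fin n) 𝕜}

/-- The eigenvalues of `H` in increasing order. -/
noncomputable def sortedEigenvalues (hH : H.IsHermitian) : Fin n → ℝ :=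
  hH.eigenvalues ∘ Tuple.sort hH.eigenvalues

lemma monotone_sortedEigenvalues (hH : H.IsHermitian) : Monotone hH.sortedEigenvalues :=
  Tuple.monotone_sort _

lemma toEuclideanLin_eigenvectorBasis (hH : H.IsHermitian) (j : Fin n) :
    toEuclideanLin H (hH.eigenvectorBasis j) =
      (hH.eigenvalues j : 𝕜) • hH.eigenvectorBasis j := by
  rw [toLpLin_apply, hH.mulVec_eigenvectorBasis, RCLike.real_smul_eq_coe_smul (K := 𝕜)]
  rfl

lemma exists_orthonormal_eigenvectors (hH : H.IsHermitian) (s : Finset (Fin n)) :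
    ∃ v : s → EuclideanSpace 𝕜 (Fin n), Orthonormal 𝕜 v ∧
      (∀ p, toEuclideanLin H (v p) = (hH.sortedEigenvalues p : 𝕜) • v p) ∧
      finrank 𝕜 (Submodule.span 𝕜 (Set.range v)) = #s := by
  have hinj : Function.Injective (Tuple.sort hH.eigenvalues ∘ ((↑) : s → Fin n)) :=
    (Tuple.sort _).injective.comp Subtype.val_injective
  have hv := hH.eigenvectorBasis.orthonormal.comp _ hinj
  refine ⟨_, hv, fun p => hH.toEuclideanLin_eigenvectorBasis _, ?_⟩
  rw [finrank_span_eq_card hv.linearIndependent, Fintype.card_coe]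

lemma exists_finrank_eq_forall_re_inner_le (hH : H.IsHermitian) (j : Fin n) :
    ∃ S : Submodule 𝕜 (EuclideanSpace 𝕜 (Fin n)), finrank 𝕜 S = j + 1 ∧
      ∀ x ∈ S, re ⟪x, toEuclideanLin H x⟫_𝕜 ≤ hH.sortedEigenvalues j * ‖x‖ ^ 2 := by
  obtain ⟨v, hv, hHv, hdim⟩ := hH.exists_orthonormal_eigenvectors (Iic j)
  exact ⟨_, by rw [hdim, Fin.card_Iic], fun x hx => hv.re_inner_map_le_of_mem_span hHv
    (fun p => hH.monotone_sortedEigenvalues (mem_Iic.1 p.2)) hx⟩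

lemma exists_finrank_eq_forall_le_re_inner (hH : H.IsHermitian) (j : Fin n) :
    ∃ S : Submodule 𝕜 (EuclideanSpace 𝕜 (Fin n)), finrank 𝕜 S = n - j ∧
      ∀ x ∈ S, hH.sortedEigenvalues j * ‖x‖ ^ 2 ≤ re ⟪x, toEuclideanLin H x⟫_𝕜 := by
  obtain ⟨v, hv, hHv, hdim⟩ := hH.exists_orthonormal_eigenvectors (Ici j)
  exact ⟨_, by rw [hdim, Fin.card_Ici], fun x hx => hv.le_re_inner_map_of_mem_span hHv
    (fun p => hH.monotone_sortedEigenvalues (mem_Ici.1 p.2)) hx⟩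

end IsHermitian

end Matrix

lemma sv_eq_sqrt_sortedEigenvalues {m : ℕ} (A : Matrix (Fin m) (Fin m) ℂ) (i : Fin m) :
    sv A i = √((isHermitian_conjTranspose_mul_self A).sortedEigenvalues i.rev) :=
  rfl

lemma sv_nonneg {m : ℕ} (A : Matrix (Fin m) (Fin m) ℂ) (i : Fin m) : 0 ≤ sv A i :=
  Real.sqrt_nonneg _

lemma sv_conjTranspose_mul_mul_le {m n : ℕ} (C : Matrix (Fin n) (Fin n) ℂ)
    {Q : Matrix (Fin n) (Fin m) ℂ} (hQ : Qᴴ * Q = 1) (k : ℕ) (hkm : k < m) (hkn : k < n) :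
    sv (Qᴴ * C * Q) ⟨k, hkm⟩ ≤ sv C ⟨k, hkn⟩ := by
  set C' := Qᴴ * C * Q
  rw [sv_eq_sqrt_sortedEigenvalues, sv_eq_sqrt_sortedEigenvalues]
  refine Real.sqrt_le_sqrt ?_
  obtain ⟨S, hS, hSC⟩ :=
    (isHermitian_conjTranspose_mul_self C).exists_finrank_eq_forall_re_inner_le
      (Fin.rev ⟨k, hkn⟩)
  obtain ⟨S', hS', hS'C'⟩ :=
    (isHermitian_conjTranspose_mul_self C').exists_finrank_eq_forall_le_re_inner
      (Fin.rev ⟨k, hkm⟩)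
  have hQnorm := norm_toEuclideanLin_of_conjTranspose_mul_self_eq_one hQ
  have hQinj : Function.Injective (toEuclideanLin Q) :=
    (LinearIsometry.mk (toEuclideanLin Q) hQnorm).injective
  have hdim : finrank ℂ (EuclideanSpace ℂ (Fin n)) <
      finrank ℂ S + finrank ℂ (S'.map (toEuclideanLin Q)) := by
    rw [← (S'.equivMapOfInjective _ hQinj).finrank_eq, hS, hS', finrank_euclideanSpace_fin,
      Fin.val_rev, Fin.val_rev]
    omega
  obtain ⟨x, hx, hx0⟩ :=
    Submodule.exists_mem_ne_zero_of_ne_bot (Submodule.inf_ne_bot_of_finrank_lt_add hdim)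
  obtain ⟨hxS, u, huS', rfl⟩ := Submodule.mem_inf.1 hx
  have hu : 0 < ‖u‖ ^ 2 := by
    have : u ≠ 0 := by rintro rfl; exact hx0 (map_zero _)
    positivity
  refine le_of_mul_le_mul_right ?_ hu
  calc _ ≤ ‖toEuclideanLin C' u‖ ^ 2 := by
        rw [← re_inner_toEuclideanLin_conjTranspose_mul_self]; exact hS'C' u huS'
    _ ≤ ‖toEuclideanLin C (toEuclideanLin Q u)‖ ^ 2 := by
        simp only [C', toLpLin_mul_same, LinearMap.comp_apply]
        gcongr
        exact norm_toEuclideanLin_conjTranspose_le hQ _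
    _ ≤ _ * ‖toEuclideanLin Q u‖ ^ 2 := by
        rw [← re_inner_toEuclideanLin_conjTranspose_mul_self]; exact hSC _ hxS
    _ = _ := by rw [hQnorm]

lemma acsP_le {m : ℕ} (C : Matrix (Fin m) (Fin m) ℂ) (i : Fin (m + 1)) :
    acsP C ≤ ((i : ℕ) : ℝ) / m + if h : (i : ℕ) < m then sv C ⟨(i : ℕ), h⟩ else 0 :=
  ciInf_le (Set.finite_range _).bddBelow i

lemma acsP_le_one {m : ℕ} (C : Matrix (Fin m) (Fin m) ℂ) : acsP C ≤ 1 := by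
  have h := acsP_le C (Fin.last m)
  rw [Fin.val_last, dif_neg (lt_irrefl m), add_zero] at h
  exact h.trans (div_self_le_one _)

lemma mul_acsP_le_acsP_of_sv_le {r N : ℕ} {C : Matrix (Fin N) (Fin N) ℂ}
    {C' : Matrix (Fin r) (Fin r) ℂ} (hrN : r ≤ N)
    (hsv : ∀ k (hkr : k < r) (hkN : k < N), sv C' ⟨k, hkr⟩ ≤ sv C ⟨k, hkN⟩) :
    (r / N : ℝ) * acsP C' ≤ acsP C := by
  refine le_ciInf fun i => ?_
  by_cases hir : (i : ℕ) < r
  · have hiN : (i : ℕ) < N := hir.trans_le hrN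
    have hN : (0 : ℝ) < N := by exact_mod_cast Nat.zero_lt_of_lt hiN
    have hr : (0 : ℝ) < r := by exact_mod_cast Nat.zero_lt_of_lt hir
    have hrN' : (r : ℝ) / N ≤ 1 := div_le_one_of_le₀ (by exact_mod_cast hrN) hN.le
    rw [dif_pos hiN]
    calc (r / N : ℝ) * acsP C' ≤ r / N * (i / r + sv C' ⟨i, hir⟩) := by
          gcongr
          simpa [dif_pos hir] using acsP_le C' ⟨i, by omega⟩
      _ = i / N + r / N * sv C' ⟨i, hir⟩ := by field_simp
      _ ≤ i / N + sv C ⟨i, hiN⟩ := by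
          gcongr
          exact (mul_le_of_le_one_left (sv_nonneg _ _) hrN').trans (hsv i hir hiN)
  · have htail : (0 : ℝ) ≤ if h : (i : ℕ) < N then sv C ⟨(i : ℕ), h⟩ else 0 := by
      split_ifs
      exacts [sv_nonneg _ _, le_rfl]
    calc (r / N : ℝ) * acsP C' ≤ r / N :=
          mul_le_of_le_one_right (by positivity) (acsP_le_one C')
      _ ≤ i / N := by gcongr; exact_mod_cast not_lt.1 hir
      _ ≤ _ := le_add_of_nonneg_right htail

section Selection

variable {N r : ℕ} (φ : Fin r → Fin N)

lemma Pmat_transpose_conjTranspose : (Pmat N r φ)ᵀᴴ = Pmat N r φ := by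
  ext k j
  simp [Pmat, apply_ite]

lemma Pmat_mul_transpose {φ : Fin r → Fin N} (hφ : Function.Injective φ) :
    Pmat N r φ * (Pmat N r φ)ᵀ = 1 := by
  ext k l
  simp [Pmat, mul_apply, one_apply, hφ.eq_iff, eq_comm]

lemma Rop_sub (A B : Matrix (Fin N) (Fin N) ℂ) :
    Rop N r φ A - Rop N r φ B = Rop N r φ (A - B) := by
  simp only [Rop, Matrix.mul_sub, Matrix.sub_mul]

lemma Rop_eq_conjTranspose_mul_mul (A : Matrix (Fin N) (Fin N) ℂ) :
    Rop N r φ A = (Pmat N r φ)ᵀᴴ * A * (Pmat N r φ)ᵀ := by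
  rw [Pmat_transpose_conjTranspose, Rop]

end Selection

theorem acs_modulus_restriction_general (N r : ℕ)
    (φ : Fin r → Fin N) (hφ : StrictMono φ)
    (A B : Matrix (Fin N) (Fin N) ℂ) :
    acsP (A - B) ≥ ((r : ℝ) / N) * acsP (Rop N r φ A - Rop N r φ B) := by
  have hrN : r ≤ N := by simpa using Fintype.card_le_of_injective φ hφ.injective
  have hPt : (Pmat N r φ)ᵀᴴ * (Pmat N r φ)ᵀ = 1 := by
    rw [Pmat_transpose_conjTranspose, Pmat_mul_transpose hφ.injective]
  rw [ge_iff_le, Rop_sub, Rop_eq_conjTranspose_mul_mul]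
  exact mul_acsP_le_acsP_of_sv_le hrN fun k hkr hkN =>
    sv_conjTranspose_mul_mul_le _ hPt k hkr hkN

/-- The a.c.s. modulus decreases under restriction, up to the density factor `r/N`:
`p(A − B) ≥ (r/N) · p(R(A) − R(B))`. -/
theorem acs_modulus_restriction (N r : ℕ) (hr : 0 < r)
    (φ : Fin r → Fin N) (hφ : StrictMono φ)
    (A B : Matrix (Fin N) (Fin N) ℂ) :
    acsP (A - B) ≥ ((r : ℝ) / N) * acsP (Rop N r φ A - Rop N r φ B) :=
  acs_modulus_restriction_general N r φ hφ A B
end
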